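/- arXiv:2109.13393 — 4 statements merged into one kernel-verified Lean document; each statement's English description precedes it below -/
import Mathlib

section
/- Let (H, X, G, k, μ, d) be a Berezin quantization with x ↦ k_x continuous and k_e ≠ 0. For σ : X → [0,1] measurable, the following are equivalent: (i) the Berezin transform σ̃(y) = ∫_X σ(x)|⟨k_x, k_y⟩|² dμ(x) tends to 0 as d(e, y) → ∞; (ii) ∫_{B(y,R)} σ dμ → 0 as d(e, y) → ∞ for some R > 0; (iii) ∫_{B(y,R)} σ dμ → 0 as d(e, y) → ∞ for all R > 0. -/
/-!
Transitivity and the invariance of `|⟨k x, k y⟩|` make `‖k y‖` constant and turn the kernel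
`x ↦ |⟨k x, k y⟩|²` into a translate of `x ↦ |⟨k x, k e⟩|²`, whose integral is `‖k e‖²` by the
Parseval identity. So the kernel is bounded by `‖k e‖⁴`, has uniformly small mass outside large
balls around `y`, and (by continuity at `e` and `k e ≠ 0`) is at least `‖k e‖⁴ / 4` on a uniform
neighbourhood of the diagonal; the last fact also makes `μ` locally finite. The lower bound gives
(i) ⇒ (ii); splitting `σ̃ y` into the integral over `B(y, R)` and the tail gives (iii) ⇒ (i); and
(ii) ⇒ (iii) because each ball `B(y, R)` is covered by the same finite number of balls of radius
`R₀` whose centres stay within `R` of `y`.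
-/

open MeasureTheory Filter

local notation "⟪" x ", " y "⟫" => @inner ℂ _ _ x y

open Metric Bornology Topology MulAction

theorem tendsto_setIntegral_compl_ball_atTop {X E : Type*} [PseudoMetricSpace X]
    [MeasurableSpace X] [OpensMeasurableSpace X] {μ : Measure X}
    [NormedAddCommGroup E] [NormedSpace ℝ E] {f : X → E} (hf : Integrable f μ) (x₀ : X) :
    Tendsto (fun R : ℝ => ∫ x in (ball x₀ R)ᶜ, f x ∂μ) atTop (𝓝 0) := by
  have hempty : ⋂ R : ℝ, (ball x₀ R)ᶜ = ∅ :=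
    Set.iInter_eq_empty_iff.2 fun x => ⟨dist x x₀ + 1, by simp⟩
  simpa [hempty] using tendsto_setIntegral_of_antitone (s := fun R : ℝ => (ball x₀ R)ᶜ)
    (fun R => measurableSet_ball.compl)
    (fun R R' h => Set.compl_subset_compl.2 (ball_subset_ball h)) ⟨0, hf.integrableOn⟩

theorem Metric.tendsto_cobounded_of_dist_le {X : Type*} [PseudoMetricSpace X] {φ : X → X}
    {R : ℝ} (h : ∀ y, dist (φ y) y ≤ R) : Tendsto φ (cobounded X) (cobounded X) := by
  rcases isEmpty_or_nonempty X with hX | ⟨⟨x₀⟩⟩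
  · exact tendsto_of_isEmpty
  rw [← tendsto_dist_right_atTop_iff x₀]
  refine tendsto_atTop_mono (fun y => ?_) <| tendsto_atTop_add_const_right _ (-R) <|
    (tendsto_dist_right_atTop_iff x₀).2 tendsto_id
  show dist y x₀ + -R ≤ dist (φ y) x₀
  linarith [dist_triangle_left y x₀ (φ y), h y]

theorem setIntegral_biUnion_finset_le_sum {X : Type*} [MeasurableSpace X] {μ : Measure X}
    {ι : Type*} (t : Finset ι) (s : ι → Set X) {f : X → ℝ} (hf : ∀ x, 0 ≤ f x)
    (hfi : ∀ i ∈ t, IntegrableOn f (s i) μ) :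
    ∫ x in ⋃ i ∈ t, s i, f x ∂μ ≤ ∑ i ∈ t, ∫ x in s i, f x ∂μ := by
  have hle : μ.restrict (⋃ i ∈ t, s i) ≤ ∑ i ∈ t, μ.restrict (s i) :=
    Measure.le_iff.2 fun u hu => by
      simpa [hu, Set.inter_iUnion₂] using measure_biUnion_finset_le t (u ∩ s ·)
  rw [← integral_finsetSum_measure hfi]
  exact integral_mono_measure hle (ae_of_all _ hf) (integrable_finsetSum_measure.2 hfi)

theorem MeasureTheory.Integrable.mul_of_mem_Icc {X : Type*} [MeasurableSpace X] {μ : Measure X}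
    {σ f : X → ℝ} (hf : Integrable f μ) (hσ : Measurable σ) (hσI : ∀ x, σ x ∈ Set.Icc 0 1) :
    Integrable (fun x => σ x * f x) μ :=
  hf.bdd_mul hσ.aestronglyMeasurable
    (ae_of_all _ fun x => abs_le.2 ⟨by linarith [(hσI x).1], (hσI x).2⟩)

section Frame

variable {H : Type*} [NormedAddCommGroup H] [InnerProductSpace ℂ H]
  {X : Type*} [MeasurableSpace X] {μ : Measure X} {k : X → H}

theorem integral_norm_inner_sq_eq_norm_sq
    (hframe : ∀ f : H, ⟪f, f⟫ = ∫ x, ⟪f, k x⟫ * ⟪k x, f⟫ ∂μ) (f : H) :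
    ∫ x, ‖⟪k x, f⟫‖ ^ 2 ∂μ = ‖f‖ ^ 2 := by
  have hconj : ∀ x, ⟪f, k x⟫ * ⟪k x, f⟫ = ((‖⟪k x, f⟫‖ ^ 2 : ℝ) : ℂ) := fun x => by
    rw [← inner_conj_symm f (k x), RCLike.conj_mul]; push_cast; rfl
  have h := hframe f
  simp only [inner_self_eq_norm_sq_to_K, hconj, integral_complex_ofReal] at h
  exact Complex.ofReal_injective (by simpa using h.symm)

theorem integrable_norm_inner_sq
    (hframe : ∀ f : H, ⟪f, f⟫ = ∫ x, ⟪f, k x⟫ * ⟪k x, f⟫ ∂μ) (f : H) :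
    Integrable (fun x => ‖⟪k x, f⟫‖ ^ 2) μ := by
  rcases eq_or_ne f 0 with rfl | hf
  · simp
  by_contra h
  have h0 := integral_undef h
  rw [integral_norm_inner_sq_eq_norm_sq hframe] at h0
  exact hf (by simpa using h0)

end Frame

section Transitive

variable {X : Type*} {G : Type*} [Group G] [MulAction G X] [IsPretransitive G X]
  {H : Type*} [NormedAddCommGroup H] [InnerProductSpace ℂ H] {k : X → H}

theorem norm_eq_of_norm_inner_smul_eq
    (hmod : ∀ (g : G) (x y : X), ‖⟪k (g • x), k (g • y)⟫‖ = ‖⟪k x, k y⟫‖) (x y : X) :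
    ‖k x‖ = ‖k y‖ := by
  obtain ⟨g, rfl⟩ := exists_smul_eq G y x
  simpa [inner_self_eq_norm_sq_to_K] using hmod g y y

theorem norm_inner_sq_le_of_norm_inner_smul_eq
    (hmod : ∀ (g : G) (x y : X), ‖⟪k (g • x), k (g • y)⟫‖ = ‖⟪k x, k y⟫‖) (x y x₀ : X) :
    ‖⟪k x, k y⟫‖ ^ 2 ≤ ‖k x₀‖ ^ 4 := by
  have h := norm_inner_le_norm (𝕜 := ℂ) (k x) (k y)
  rw [norm_eq_of_norm_inner_smul_eq hmod x x₀, norm_eq_of_norm_inner_smul_eq hmod y x₀] at h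
  calc ‖⟪k x, k y⟫‖ ^ 2 ≤ (‖k x₀‖ * ‖k x₀‖) ^ 2 := by gcongr
    _ = ‖k x₀‖ ^ 4 := by ring

end Transitive

section IsometricAction

variable {X : Type*} [MetricSpace X] {G : Type*} [Group G] [MulAction G X] [IsIsometricSMul G X]

theorem exists_finset_ball_smul_subset_biUnion [ProperSpace X] (x₀ : X) (R : ℝ) {r : ℝ}
    (hr : 0 < r) : ∃ t : Finset X, (∀ z ∈ t, dist z x₀ ≤ R) ∧
      ∀ g : G, ball (g • x₀) R ⊆ ⋃ z ∈ t, ball (g • z) r := by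
  obtain ⟨t, htR, ht, hcover⟩ := finite_cover_balls_of_compact (isCompact_closedBall x₀ R) hr
  refine ⟨ht.toFinset, fun z hz => htR (ht.mem_toFinset.1 hz), fun g x hx => ?_⟩
  have hx' : g⁻¹ • x ∈ closedBall x₀ R := by
    rw [mem_closedBall, ← dist_smul g, smul_inv_smul]
    exact (mem_ball.1 hx).le
  obtain ⟨z, hz, hxz⟩ := Set.mem_iUnion₂.1 (hcover hx')
  refine Set.mem_iUnion₂.2 ⟨z, ht.mem_toFinset.2 hz, ?_⟩
  rwa [mem_ball, ← smul_inv_smul g x, dist_smul]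

variable [IsPretransitive G X] {H : Type*} [NormedAddCommGroup H] [InnerProductSpace ℂ H]
  {k : X → H}

theorem exists_pos_forall_dist_lt_lt_norm_inner
    (hmod : ∀ (g : G) (x y : X), ‖⟪k (g • x), k (g • y)⟫‖ = ‖⟪k x, k y⟫‖)
    {x₀ : X} (hk : ContinuousAt k x₀) {a : ℝ} (ha : a < ‖k x₀‖ ^ 2) :
    ∃ r > 0, ∀ x y, dist x y < r → a < ‖⟪k x, k y⟫‖ := by
  have hcont : ContinuousAt (fun x => ‖⟪k x, k x₀⟫‖) x₀ := (hk.inner continuousAt_const).norm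
  have hval : ‖⟪k x₀, k x₀⟫‖ = ‖k x₀‖ ^ 2 := by simp [inner_self_eq_norm_sq_to_K]
  obtain ⟨r, hr, hball⟩ := Metric.eventually_nhds_iff.1 (hcont.eventually_const_lt (hval ▸ ha))
  refine ⟨r, hr, fun x y hxy => ?_⟩
  obtain ⟨g, hg⟩ := exists_smul_eq G y x₀
  rw [← hmod g, hg]
  exact hball (by rwa [← hg, dist_smul])

end IsometricAction

section Measure

variable {X : Type*} [MetricSpace X] [MeasurableSpace X] {μ : Measure X}
  {G : Type*} [Group G] [MulAction G X] [IsIsometricSMul G X]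
  {H : Type*} [NormedAddCommGroup H] [InnerProductSpace ℂ H] {k : X → H}

theorem isLocallyFiniteMeasure_of_parseval [IsPretransitive G X]
    (hframe : ∀ f : H, ⟪f, f⟫ = ∫ x, ⟪f, k x⟫ * ⟪k x, f⟫ ∂μ)
    (hmod : ∀ (g : G) (x y : X), ‖⟪k (g • x), k (g • y)⟫‖ = ‖⟪k x, k y⟫‖)
    {x₀ : X} (hk : ContinuousAt k x₀) (hk₀ : k x₀ ≠ 0) : IsLocallyFiniteMeasure μ := by
  have ha : 0 < ‖k x₀‖ ^ 2 / 2 := by positivity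
  obtain ⟨r, hr, hlow⟩ :=
    exists_pos_forall_dist_lt_lt_norm_inner hmod hk (half_lt_self (by positivity))
  refine ⟨fun y => ⟨ball y r, ball_mem_nhds y hr, ?_⟩⟩
  refine (measure_mono fun x hx => ?_).trans_lt
    ((integrable_norm_inner_sq hframe (k y)).measure_ge_lt_top (pow_pos ha 2))
  exact pow_le_pow_left₀ ha.le (hlow x y (mem_ball.1 hx)).le 2

variable [BorelSpace X] [SMulInvariantMeasure G X μ]

theorem setIntegral_compl_ball_norm_inner_sq_smul
    (hmod : ∀ (g : G) (x y : X), ‖⟪k (g • x), k (g • y)⟫‖ = ‖⟪k x, k y⟫‖) (g : G) (y : X)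
    (R : ℝ) : ∫ x in (ball (g • y) R)ᶜ, ‖⟪k x, k (g • y)⟫‖ ^ 2 ∂μ
      = ∫ x in (ball y R)ᶜ, ‖⟪k x, k y⟫‖ ^ 2 ∂μ := by
  rw [← (measurePreserving_smul g μ).setIntegral_preimage_emb
    (MeasurableEquiv.smul g).measurableEmbedding, Set.preimage_compl, preimage_smul_ball,
    inv_smul_smul]
  simp_rw [hmod]

theorem exists_pos_forall_setIntegral_compl_ball_lt [IsPretransitive G X] [Nonempty X]
    (hframe : ∀ f : H, ⟪f, f⟫ = ∫ x, ⟪f, k x⟫ * ⟪k x, f⟫ ∂μ)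
    (hmod : ∀ (g : G) (x y : X), ‖⟪k (g • x), k (g • y)⟫‖ = ‖⟪k x, k y⟫‖) {ε : ℝ} (hε : 0 < ε) :
    ∃ R > 0, ∀ y, ∫ x in (ball y R)ᶜ, ‖⟪k x, k y⟫‖ ^ 2 ∂μ < ε := by
  obtain ⟨x₀⟩ := ‹Nonempty X›
  obtain ⟨R, hR, hRpos⟩ := (((tendsto_setIntegral_compl_ball_atTop
    (integrable_norm_inner_sq hframe (k x₀)) x₀).eventually (gt_mem_nhds hε)).and
    (eventually_gt_atTop 0)).exists
  refine ⟨R, hRpos, fun y => ?_⟩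
  obtain ⟨g, rfl⟩ := exists_smul_eq G x₀ y
  rwa [setIntegral_compl_ball_norm_inner_sq_smul hmod]

end Measure

section Thin

variable {X : Type*} [MetricSpace X] [MeasurableSpace X] {μ : Measure X} {σ : X → ℝ}

theorem integrableOn_ball_of_mem_Icc [ProperSpace X] [IsFiniteMeasureOnCompacts μ]
    (hσ : Measurable σ) (hσI : ∀ x, σ x ∈ Set.Icc 0 1) (y : X) (R : ℝ) :
    IntegrableOn σ (ball y R) μ :=
  Measure.integrableOn_of_bounded (M := 1) measure_ball_lt_top.ne hσ.aestronglyMeasurable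
    (ae_of_all _ fun x => abs_le.2 ⟨by linarith [(hσI x).1], (hσI x).2⟩)

variable [OpensMeasurableSpace X]

theorem tendsto_setIntegral_ball_of_tendsto_integral_mul (hσ : Measurable σ)
    (hσI : ∀ x, σ x ∈ Set.Icc 0 1) (hσi : ∀ y R, IntegrableOn σ (ball y R) μ)
    {K : X → X → ℝ} {a r : ℝ} (ha : 0 < a) (hK : ∀ x y, dist x y < r → a ≤ K x y)
    (hK0 : ∀ x y, 0 ≤ K x y) (hKi : ∀ y, Integrable (K · y) μ)
    (h : Tendsto (fun y => ∫ x, σ x * K x y ∂μ) (cobounded X) (𝓝 0)) :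
    Tendsto (fun y => ∫ x in ball y r, σ x ∂μ) (cobounded X) (𝓝 0) := by
  refine tendsto_of_tendsto_of_tendsto_of_le_of_le tendsto_const_nhds
    (by simpa using h.const_mul a⁻¹)
    (fun y => setIntegral_nonneg measurableSet_ball fun x _ => (hσI x).1) (fun y => ?_)
  have hσK := (hKi y).mul_of_mem_Icc hσ hσI
  rw [le_inv_mul_iff₀ ha]
  calc a * ∫ x in ball y r, σ x ∂μ = ∫ x in ball y r, a * σ x ∂μ := (integral_const_mul _ _).symm
    _ ≤ ∫ x in ball y r, σ x * K x y ∂μ := by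
      refine setIntegral_mono_on ((hσi y r).const_mul a)
        hσK.integrableOn measurableSet_ball fun x hx => ?_
      rw [mul_comm]
      exact mul_le_mul_of_nonneg_left (hK x y (mem_ball.1 hx)) (hσI x).1
    _ ≤ ∫ x, σ x * K x y ∂μ :=
      setIntegral_le_integral hσK (ae_of_all _ fun x => mul_nonneg (hσI x).1 (hK0 x y))

theorem tendsto_setIntegral_ball_of_tendsto_setIntegral_ball [ProperSpace X] [Nonempty X]
    {G : Type*} [Group G] [MulAction G X] [IsIsometricSMul G X] [IsPretransitive G X]
    (hσ0 : ∀ x, 0 ≤ σ x) (hσi : ∀ y R, IntegrableOn σ (ball y R) μ) {R₀ : ℝ} (hR₀ : 0 < R₀)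
    (h : Tendsto (fun y => ∫ x in ball y R₀, σ x ∂μ) (cobounded X) (𝓝 0)) (R : ℝ) :
    Tendsto (fun y => ∫ x in ball y R, σ x ∂μ) (cobounded X) (𝓝 0) := by
  obtain ⟨x₀⟩ := ‹Nonempty X›
  obtain ⟨t, htR, hcover⟩ := exists_finset_ball_smul_subset_biUnion (G := G) x₀ R hR₀
  choose g hg using exists_smul_eq G x₀
  have hterm : ∀ z ∈ t,
      Tendsto (fun y => ∫ x in ball (g y • z) R₀, σ x ∂μ) (cobounded X) (𝓝 0) := fun z hz =>
    h.comp <| tendsto_cobounded_of_dist_le fun y => by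
      have := htR z hz
      rwa [← dist_smul (g y), hg y] at this
  refine tendsto_of_tendsto_of_tendsto_of_le_of_le tendsto_const_nhds
    (by simpa using tendsto_finsetSum t hterm)
    (fun y => setIntegral_nonneg measurableSet_ball fun x _ => hσ0 x) (fun y => ?_)
  calc ∫ x in ball y R, σ x ∂μ ≤ ∫ x in ⋃ z ∈ t, ball (g y • z) R₀, σ x ∂μ := by
        refine setIntegral_mono_set (integrableOn_finset_iUnion.2 fun z _ => hσi _ _)
          (ae_of_all _ hσ0) (LE.le.eventuallyLE ?_)
        simpa only [hg y] using hcover (g y)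
    _ ≤ ∑ z ∈ t, ∫ x in ball (g y • z) R₀, σ x ∂μ :=
      setIntegral_biUnion_finset_le_sum t _ hσ0 fun z _ => hσi _ _

theorem tendsto_integral_mul_of_tendsto_setIntegral_ball (hσ : Measurable σ)
    (hσI : ∀ x, σ x ∈ Set.Icc 0 1) (hσi : ∀ y R, IntegrableOn σ (ball y R) μ)
    {K : X → X → ℝ} {C : ℝ} (hK0 : ∀ x y, 0 ≤ K x y)
    (hKC : ∀ x y, K x y ≤ C) (hKi : ∀ y, Integrable (K · y) μ)
    (htail : ∀ ε > 0, ∃ R > 0, ∀ y, ∫ x in (ball y R)ᶜ, K x y ∂μ < ε)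
    (h : ∀ R > 0, Tendsto (fun y => ∫ x in ball y R, σ x ∂μ) (cobounded X) (𝓝 0)) :
    Tendsto (fun y => ∫ x, σ x * K x y ∂μ) (cobounded X) (𝓝 0) := by
  refine tendsto_order.2 ⟨fun a ha => Eventually.of_forall fun y =>
    ha.trans_le (integral_nonneg fun x => mul_nonneg (hσI x).1 (hK0 x y)), fun ε hε => ?_⟩
  obtain ⟨R, hR, htailR⟩ := htail (ε / 2) (half_pos hε)
  have hnear : ∀ᶠ y in cobounded X, C * ∫ x in ball y R, σ x ∂μ < ε / 2 :=
    ((h R hR).const_mul C).eventually (gt_mem_nhds (by simpa using half_pos hε))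
  filter_upwards [hnear] with y hy
  have hσK := (hKi y).mul_of_mem_Icc hσ hσI
  have hball : ∫ x in ball y R, σ x * K x y ∂μ ≤ C * ∫ x in ball y R, σ x ∂μ := by
    rw [← integral_const_mul]
    exact setIntegral_mono_on hσK.integrableOn ((hσi y R).const_mul C) measurableSet_ball
      fun x _ => by rw [mul_comm C]; exact mul_le_mul_of_nonneg_left (hKC x y) (hσI x).1
  have hcompl : ∫ x in (ball y R)ᶜ, σ x * K x y ∂μ ≤ ∫ x in (ball y R)ᶜ, K x y ∂μ :=
    setIntegral_mono_on hσK.integrableOn (hKi y).integrableOn measurableSet_ball.compl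
      fun x _ => mul_le_of_le_one_left (hK0 x y) (hσI x).2
  linarith [integral_add_compl (measurableSet_ball (x := y) (ε := R)) hσK, htailR y]

end Thin

theorem thinness_tfae_general
    {H : Type*} [NormedAddCommGroup H] [InnerProductSpace ℂ H]
    {X : Type*} [MetricSpace X] [ProperSpace X] [MeasurableSpace X] [BorelSpace X]
    (μ : Measure X)
    {G : Type*} [Group G] [MulAction G X]
    (htrans : ∀ x y : X, ∃ g : G, g • x = y)
    (hμinv : ∀ (g : G) (E : Set X), MeasurableSet E → μ ((g • ·) '' E) = μ E)
    (hdinv : ∀ (g : G) (x y : X), dist (g • x) (g • y) = dist x y)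
    (k : X → H) (hk : Continuous k)
    (hframe : ∀ f g : H, ⟪f, g⟫ = ∫ x, ⟪f, k x⟫ * ⟪k x, g⟫ ∂μ)
    (hmod : ∀ (g : G) (x y : X), ‖⟪k (g • x), k (g • y)⟫‖ = ‖⟪k x, k y⟫‖)
    (e : X) (hke : k e ≠ 0)
    (σ : X → ℝ) (hσmeas : Measurable σ) (hσ0 : ∀ x, 0 ≤ σ x) (hσ1 : ∀ x, σ x ≤ 1) :
    List.TFAE
      [ Tendsto (fun y : X => ∫ x, σ x * ‖⟪k x, k y⟫‖ ^ 2 ∂μ)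
          (comap (dist e) atTop) (nhds 0),
        ∃ R > (0 : ℝ), Tendsto (fun y : X => ∫ x in Metric.ball y R, σ x ∂μ)
          (comap (dist e) atTop) (nhds 0),
        ∀ R > (0 : ℝ), Tendsto (fun y : X => ∫ x in Metric.ball y R, σ x ∂μ)
          (comap (dist e) atTop) (nhds 0) ] := by
  have : IsIsometricSMul G X := ⟨fun g => Isometry.of_dist_eq (hdinv g)⟩
  have : IsPretransitive G X := ⟨htrans⟩
  have : SMulInvariantMeasure G X μ :=
    ⟨fun g s hs => by rw [Set.preimage_smul, ← Set.image_smul, hμinv g⁻¹ s hs]⟩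
  have : Nonempty X := ⟨e⟩
  have hparseval : ∀ f : H, ⟪f, f⟫ = ∫ x, ⟪f, k x⟫ * ⟪k x, f⟫ ∂μ := fun f => hframe f f
  have := isLocallyFiniteMeasure_of_parseval hparseval hmod hk.continuousAt hke
  have hσI : ∀ x, σ x ∈ Set.Icc 0 1 := fun x => ⟨hσ0 x, hσ1 x⟩
  have hσi := integrableOn_ball_of_mem_Icc (μ := μ) hσmeas hσI
  have hKi : ∀ y, Integrable (fun x => ‖⟪k x, k y⟫‖ ^ 2) μ :=
    fun y => integrable_norm_inner_sq hparseval (k y)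
  have ha : 0 < ‖k e‖ ^ 2 / 2 := by positivity
  obtain ⟨r, hr, hlow⟩ :=
    exists_pos_forall_dist_lt_lt_norm_inner hmod hk.continuousAt (half_lt_self (by positivity))
  simp only [comap_dist_left_atTop]
  tfae_have 1 → 2 := fun h => ⟨r, hr, tendsto_setIntegral_ball_of_tendsto_integral_mul hσmeas
    hσI hσi (pow_pos ha 2) (fun x y hxy => pow_le_pow_left₀ ha.le (hlow x y hxy).le 2)
    (fun _ _ => by positivity) hKi h⟩
  tfae_have 2 → 3 := fun ⟨R₀, hR₀, h⟩ R _ =>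
    tendsto_setIntegral_ball_of_tendsto_setIntegral_ball (G := G) hσ0 hσi hR₀ h R
  tfae_have 3 → 1 := tendsto_integral_mul_of_tendsto_setIntegral_ball hσmeas hσI hσi
    (fun _ _ => by positivity) (norm_inner_sq_le_of_norm_inner_smul_eq hmod · · e) hKi
    fun _ hε => exists_pos_forall_setIntegral_compl_ball_lt hparseval hmod hε
  tfae_finish

/-- characterization of thinness.  For a Berezin quantization with a
continuous frame and nonzero frame vectors and `σ : X → [0,1]` measurable, the
following are equivalent:
(i) the Berezin transform of `σ` vanishes at infinity;
(ii) `∫_{B(y,R)} σ dμ → 0` as `y → ∞` for some `R > 0`;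
(iii) `∫_{B(y,R)} σ dμ → 0` as `y → ∞` for all `R > 0`. -/
theorem thinness_tfae
    {H : Type*} [NormedAddCommGroup H] [InnerProductSpace ℂ H] [CompleteSpace H]
    {X : Type*} [MetricSpace X] [ProperSpace X] [MeasurableSpace X] [BorelSpace X]
    (μ : Measure X)
    {G : Type*} [Group G] [MulAction G X]
    (htrans : ∀ x y : X, ∃ g : G, g • x = y)
    (hμinv : ∀ (g : G) (E : Set X), MeasurableSet E → μ ((g • ·) '' E) = μ E)
    (hdinv : ∀ (g : G) (x y : X), dist (g • x) (g • y) = dist x y)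
    (k : X → H) (hk : Continuous k)
    (hframe : ∀ f g : H, ⟪f, g⟫ = ∫ x, ⟪f, k x⟫ * ⟪k x, g⟫ ∂μ)
    (hmod : ∀ (g : G) (x y : X), ‖⟪k (g • x), k (g • y)⟫‖ = ‖⟪k x, k y⟫‖)
    (e : X) (hke : k e ≠ 0)
    (σ : X → ℝ) (hσmeas : Measurable σ) (hσ0 : ∀ x, 0 ≤ σ x) (hσ1 : ∀ x, σ x ≤ 1) :
    List.TFAE
      [ Tendsto (fun y : X => ∫ x, σ x * ‖⟪k x, k y⟫‖ ^ 2 ∂μ)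
          (comap (dist e) atTop) (nhds 0),
        ∃ R > (0 : ℝ), Tendsto (fun y : X => ∫ x in Metric.ball y R, σ x ∂μ)
          (comap (dist e) atTop) (nhds 0),
        ∀ R > (0 : ℝ), Tendsto (fun y : X => ∫ x in Metric.ball y R, σ x ∂μ)
          (comap (dist e) atTop) (nhds 0) ] :=
  thinness_tfae_general μ htrans hμinv hdinv k hk hframe hmod e hke σ hσmeas hσ0 hσ1
end

section
/- Let {k_x}_{x∈X} be a continuous Parseval frame for H over a measure space (X, μ). If σ : X → [0, ∞) is bounded and in L¹(X, μ), then the Toeplitz operator T_σ f = ∫_X σ(x)⟨f, k_x⟩ k_x dμ(x) is compact. -/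
open MeasureTheory

local notation "⟪" x ", " y "⟫" => @inner ℂ _ _ x y

/-!
A bounded sequence in a Hilbert space has a weakly Cauchy subsequence: apply sequential
Banach–Alaoglu in the closed span of the sequence, which is separable. If `d` runs over
differences of such a subsequence, then `‖T d‖² = ∫ σ ⟪d, k x⟫ ⟪k x, T d⟫ dμ`; the integrand
tends to zero pointwise and is dominated by a constant multiple of `|σ|`, so dominated convergence
makes the image sequence Cauchy. Hence `T` maps the unit ball to a totally bounded set.
-/

open Filter Topology
open scoped InnerProductSpace

theorem totallyBounded_of_forall_exists_cauchySeq_subseq {X : Type*} [UniformSpace X]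
    {s : Set X}
    (h : ∀ u : ℕ → X, (∀ n, u n ∈ s) → ∃ φ : ℕ → ℕ, StrictMono φ ∧ CauchySeq (u ∘ φ)) :
    TotallyBounded s := by
  intro V hV
  by_contra! hcover
  obtain ⟨u, hu⟩ : ∃ u : ℕ → X, ∀ n, u n ∈ s ∧ ∀ m < n, (u n, u m) ∉ V := by
    simpa [Set.not_subset] using Set.seq_of_forall_finite_exists fun t ht ↦
      Set.not_subset.1 (hcover t ht)
  obtain ⟨φ, hφ, hcauchy⟩ := h u fun n ↦ (hu n).1
  obtain ⟨N, hN⟩ := hcauchy.mem_entourage hV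
  exact (hu (φ (N + 1))).2 (φ N) (hφ N.lt_add_one) (hN (N + 1) N N.le_succ le_rfl)

theorem isCompactOperator_of_forall_exists_cauchySeq_subseq {𝕜 E F : Type*}
    [NontriviallyNormedField 𝕜] [NormedAddCommGroup E] [NormedSpace 𝕜 E]
    [NormedAddCommGroup F] [NormedSpace 𝕜 F] [CompleteSpace F] (T : E →L[𝕜] F)
    (h : ∀ u : ℕ → E, (∀ n, ‖u n‖ ≤ 1) → ∃ φ : ℕ → ℕ, StrictMono φ ∧ CauchySeq (T ∘ u ∘ φ)) :
    IsCompactOperator T := by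
  refine (isCompactOperator_iff_isCompact_closure_image_closedBall (T : E →ₗ[𝕜] F)
    zero_lt_one).2 ((TotallyBounded.closure ?_).isCompact_of_isClosed isClosed_closure)
  refine totallyBounded_of_forall_exists_cauchySeq_subseq fun v hv ↦ ?_
  choose u hu hTu using hv
  obtain ⟨φ, hφ, hcauchy⟩ := h u fun n ↦ by simpa using hu n
  obtain rfl : v = T ∘ u := funext fun n ↦ (hTu n).symm
  exact ⟨φ, hφ, hcauchy⟩

section WeakSequentialCompactness

variable {𝕜 H : Type*} [RCLike 𝕜] [NormedAddCommGroup H] [InnerProductSpace 𝕜 H]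
  [CompleteSpace H]

theorem exists_subseq_cauchySeq_inner (u : ℕ → H) {R : ℝ} (hu : ∀ n, ‖u n‖ ≤ R) :
    ∃ φ : ℕ → ℕ, StrictMono φ ∧ ∀ v : H, CauchySeq fun n ↦ ⟪u (φ n), v⟫_𝕜 := by
  set K := (Submodule.span 𝕜 (Set.range u)).topologicalClosure
  have : TopologicalSpace.SeparableSpace K :=
    ((Set.countable_range u).isSeparable.span (R := 𝕜)).closure.separableSpace
  have hmem : ∀ n, u n ∈ K := fun n ↦
    (Submodule.span 𝕜 (Set.range u)).le_topologicalClosure (Submodule.subset_span ⟨n, rfl⟩)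
  let w : ℕ → WeakDual 𝕜 K := fun n ↦
    StrongDual.toWeakDual (InnerProductSpace.toDual 𝕜 K ⟨u n, hmem n⟩)
  obtain ⟨ℓ, -, φ, hφ, hℓ⟩ := WeakDual.isSeqCompact_closedBall (𝕜 := 𝕜) (E := K) 0 R
    (x := w) fun n ↦ by simpa [w] using hu n
  refine ⟨φ, hφ, fun v ↦ ?_⟩
  have hinner : ∀ n, ⟪u (φ n), v⟫_𝕜 = w (φ n) (K.orthogonalProjectionOnto v) := fun n ↦
    (K.inner_orthogonalProjectionOnto_eq_of_mem_left ⟨u (φ n), hmem _⟩ v).symm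
  simp_rw [hinner]
  exact (((WeakDual.eval_continuous _).tendsto ℓ).comp hℓ).cauchySeq

end WeakSequentialCompactness

section FrameIntegral

variable {𝕜 H X : Type*} [RCLike 𝕜] [NormedAddCommGroup H] [InnerProductSpace 𝕜 H]
  [MeasurableSpace X] {μ : Measure X} {k : X → H} {C : ℝ} {σ : X → 𝕜}

theorem norm_inner_le_mul_of_le {a b : H} {r s : ℝ} (ha : ‖a‖ ≤ r) (hb : ‖b‖ ≤ s) :
    ‖⟪a, b⟫_𝕜‖ ≤ r * s :=
  (norm_inner_le_norm a b).trans (mul_le_mul ha hb (norm_nonneg b) ((norm_nonneg a).trans ha))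

theorem tendsto_integral_mul_inner_mul_inner {ι : Type*} {l : Filter ι} [l.IsCountablyGenerated]
    (hmeas : ∀ f : H, Measurable fun x ↦ ⟪f, k x⟫_𝕜) (hbd : ∀ x, ‖k x‖ ≤ C)
    (hσ : Integrable σ μ) {d e : ι → H} {R R' : ℝ} (hd : ∀ i, ‖d i‖ ≤ R) (he : ∀ i, ‖e i‖ ≤ R')
    (hlim : ∀ x, Tendsto (fun i ↦ ⟪d i, k x⟫_𝕜) l (𝓝 0)) :
    Tendsto (fun i ↦ ∫ x, σ x * ⟪d i, k x⟫_𝕜 * ⟪k x, e i⟫_𝕜 ∂μ) l (𝓝 0) := by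
  have hmeas_conj (f : H) : Measurable fun x ↦ ⟪k x, f⟫_𝕜 := by
    simpa [Function.comp_def] using RCLike.continuous_conj.measurable.comp (hmeas f)
  have hF_meas : ∀ i, AEStronglyMeasurable (fun x ↦ σ x * ⟪d i, k x⟫_𝕜 * ⟪k x, e i⟫_𝕜) μ :=
    fun i ↦ (hσ.aestronglyMeasurable.mul (hmeas _).aestronglyMeasurable).mul
      (hmeas_conj _).aestronglyMeasurable
  have hF_le : ∀ i x, ‖σ x * ⟪d i, k x⟫_𝕜 * ⟪k x, e i⟫_𝕜‖ ≤ ‖σ x‖ * (R * C) * (C * R') :=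
    fun i x ↦ by
      have h₁ := norm_inner_le_mul_of_le (𝕜 := 𝕜) (hd i) (hbd x)
      have h₂ := norm_inner_le_mul_of_le (𝕜 := 𝕜) (hbd x) (he i)
      rw [norm_mul, norm_mul]
      gcongr
      exact mul_nonneg (norm_nonneg _) ((norm_nonneg _).trans h₁)
  have hF_lim : ∀ x, Tendsto (fun i ↦ σ x * ⟪d i, k x⟫_𝕜 * ⟪k x, e i⟫_𝕜) l (𝓝 0) := fun x ↦ by
    refine Tendsto.zero_mul_isBoundedUnder_le ?_ (isBoundedUnder_of ⟨C * R', fun i ↦ ?_⟩)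
    · simpa using (hlim x).const_mul (σ x)
    · exact norm_inner_le_mul_of_le (hbd x) (he i)
  simpa using tendsto_integral_filter_of_dominated_convergence _
    (Eventually.of_forall hF_meas) (Eventually.of_forall fun i ↦ Eventually.of_forall (hF_le i))
    ((hσ.norm.mul_const _).mul_const _) (Eventually.of_forall hF_lim)

theorem cauchySeq_apply_of_cauchySeq_inner (hmeas : ∀ f : H, Measurable fun x ↦ ⟪f, k x⟫_𝕜)
    (hbd : ∀ x, ‖k x‖ ≤ C) (hσ : Integrable σ μ) (T : H →L[𝕜] H)
    (hT : ∀ f g, ⟪T f, g⟫_𝕜 = ∫ x, σ x * ⟪f, k x⟫_𝕜 * ⟪k x, g⟫_𝕜 ∂μ)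
    {u : ℕ → H} {R : ℝ} (hu : ∀ n, ‖u n‖ ≤ R) (hweak : ∀ v, CauchySeq fun n ↦ ⟪u n, v⟫_𝕜) :
    CauchySeq (T ∘ u) := by
  set d : ℕ × ℕ → H := fun p ↦ u p.1 - u p.2
  have hd : ∀ p, ‖d p‖ ≤ R + R := fun p ↦ (norm_sub_le _ _).trans (add_le_add (hu _) (hu _))
  have hd_lim : ∀ x, Tendsto (fun p ↦ ⟪d p, k x⟫_𝕜) atTop (𝓝 0) := fun x ↦ by
    simpa [d, inner_sub_left, dist_eq_norm, tendsto_zero_iff_norm_tendsto_zero] using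
      cauchySeq_iff_tendsto_dist_atTop_0.1 (hweak (k x))
  have hsq : Tendsto (fun p ↦ ‖T (d p)‖ ^ 2) atTop (𝓝 0) := by
    simpa [← hT, inner_self_eq_norm_sq_to_K, tendsto_zero_iff_norm_tendsto_zero] using
      tendsto_integral_mul_inner_mul_inner hmeas hbd hσ hd (fun p ↦ T.le_opNorm_of_le (hd p))
        hd_lim
  rw [cauchySeq_iff_tendsto_dist_atTop_0]
  simpa [dist_eq_norm, d, Function.comp_def] using (Real.continuous_sqrt.tendsto 0).comp hsq

end FrameIntegral

theorem toeplitz_integrable_symbol_compact_general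
    {H : Type*} [NormedAddCommGroup H] [InnerProductSpace ℂ H] [CompleteSpace H]
    {X : Type*} [MeasurableSpace X] (μ : Measure X) (k : X → H)
    (hmeas : ∀ f : H, Measurable fun x => ⟪f, k x⟫)
    (C : ℝ) (hbd : ∀ x, ‖k x‖ ≤ C)
    (σ : X → ℝ)
    (hσint : Integrable σ μ)
    (T : H →L[ℂ] H)
    (hT : ∀ f g : H, ⟪T f, g⟫ = ∫ x, (σ x : ℂ) * ⟪f, k x⟫ * ⟪k x, g⟫ ∂μ) :
    IsCompactOperator T := by
  refine isCompactOperator_of_forall_exists_cauchySeq_subseq T fun u hu ↦ ?_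
  obtain ⟨φ, hφ, hweak⟩ := exists_subseq_cauchySeq_inner (𝕜 := ℂ) u hu
  exact ⟨φ, hφ, cauchySeq_apply_of_cauchySeq_inner hmeas hbd hσint.ofReal T hT
    (fun n ↦ hu (φ n)) hweak⟩

/-- for a continuous Parseval frame with uniformly bounded vectors,
the Toeplitz operator with a bounded, nonnegative, integrable symbol is compact. -/
theorem toeplitz_integrable_symbol_compact
    {H : Type*} [NormedAddCommGroup H] [InnerProductSpace ℂ H] [CompleteSpace H]
    {X : Type*} [MeasurableSpace X] (μ : Measure X) (k : X → H)
    (hframe : ∀ f g : H, ⟪f, g⟫ = ∫ x, ⟪f, k x⟫ * ⟪k x, g⟫ ∂μ)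
    (hmeas : ∀ f : H, Measurable fun x => ⟪f, k x⟫)
    (C : ℝ) (hbd : ∀ x, ‖k x‖ ≤ C)
    (σ : X → ℝ) (hσ0 : ∀ x, 0 ≤ σ x) (B : ℝ) (hσbd : ∀ x, σ x ≤ B)
    (hσint : Integrable σ μ)
    (T : H →L[ℂ] H)
    (hT : ∀ f g : H, ⟪T f, g⟫ = ∫ x, (σ x : ℂ) * ⟪f, k x⟫ * ⟪k x, g⟫ ∂μ) :
    IsCompactOperator T :=
  toeplitz_integrable_symbol_compact_general μ k hmeas C hbd σ hσint T hT
end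

section
/- Let 0 < ε < α ≤ 1. Suppose φ ∈ L¹(ℝ^d) ∩ L²(ℝ^d) satisfies: (a) ∫ φ = 0; (b) ∫ |φ(x)| |x|^α dx < ∞; (c) ‖τ_h φ − φ‖_{L¹} ≤ C|h|^α for all h (where τ_h φ(x) = φ(x + h)). Then the wavelet self-reproducing kernel W_φφ(a,b) = ⟨φ, φ_{a,b}⟩ with φ_{a,b}(x) = a^{-d/2}φ(a^{-1}x − b) satisfies ∫_0^∞ ∫_{ℝ^d} |W_φφ(a,b)| a^{d/2+ε} db (da/a) < ∞. -/
/-!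
Write `W(a, b) = a^{-d/2} ⟨φ, φ(a⁻¹ · - b)⟩`. By Tonelli and translation invariance,
`∫ |⟨φ, φ(a⁻¹ · - b)⟩| db ≤ ‖φ‖₁²`, so the weighted integrand is `O(a^{ε-1})`, integrable near
`0`. For large `a`, the mean-zero condition lets us replace `φ(a⁻¹x - b)` by
`φ(a⁻¹x - b) - φ(-b)`, and the L¹-Hölder modulus bounds its `b`-integral by `C |a⁻¹x|^α`;
against the `α`-moment of `φ` this gives `O(a^{ε-α-1})`, integrable at infinity since `ε < α`.
-/

open MeasureTheory ComplexConjugate Real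
open scoped ENNReal

lemma enorm_integral_mul_conj_le_of_integral_eq_zero {X : Type*} [MeasurableSpace X]
    {μ : Measure X} {f : X → ℂ} (hf : Integrable f μ) (hf0 : ∫ x, f x ∂μ = 0)
    (g : X → ℂ) (z : ℂ) :
    ‖∫ x, f x * conj (g x) ∂μ‖ₑ ≤ ∫⁻ x, ‖f x‖ₑ * ‖g x - z‖ₑ ∂μ := by
  by_cases hfg : Integrable (fun x => f x * conj (g x)) μ
  · have hshift : ∫ x, f x * conj (g x) ∂μ = ∫ x, f x * conj (g x - z) ∂μ := by
      simp only [map_sub, mul_sub]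
      rw [integral_sub hfg (hf.mul_const _), integral_mul_const, hf0, zero_mul, sub_zero]
    rw [hshift]
    refine (enorm_integral_le_lintegral_enorm _).trans_eq ?_
    simp only [enorm_mul, RCLike.enorm_conj]
  · simp [integral_undef hfg]

lemma ofReal_norm_integral_mul_conj_ofReal_mul {X : Type*} [MeasurableSpace X]
    {μ : Measure X} (f g : X → ℂ) {c : ℝ} (hc : 0 ≤ c) :
    ENNReal.ofReal ‖∫ x, f x * conj ((c : ℂ) * g x) ∂μ‖ =
      ENNReal.ofReal c * ‖∫ x, f x * conj (g x) ∂μ‖ₑ := by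
  simp only [map_mul, Complex.conj_ofReal, mul_left_comm (f _), integral_const_mul, ofReal_norm,
    enorm_mul]
  rw [← ofReal_norm, Complex.norm_real, Real.norm_of_nonneg hc]

lemma lintegral_enorm_comp_sub_sub_comp_neg {G F : Type*} [AddCommGroup G] [MeasurableSpace G]
    [MeasurableNeg G] [NormedAddCommGroup F] {μ : Measure G} [μ.IsNegInvariant] (g : G → F)
    (v : G) : ∫⁻ b, ‖g (v - b) - g (-b)‖ₑ ∂μ = ∫⁻ u, ‖g (u + v) - g u‖ₑ ∂μ := by
  simpa only [neg_add_eq_sub] using lintegral_neg_eq_self (μ := μ) fun u => ‖g (u + v) - g u‖ₑ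

section Correlation

variable {G : Type*} [AddCommGroup G] [MeasurableSpace G] [MeasurableAdd₂ G] [MeasurableNeg G]
  {μ : Measure G} [SFinite μ] [μ.IsAddLeftInvariant]

lemma lintegral_lintegral_enorm_mul_comp_sub_sub_swap {f g k : G → ℂ}
    (hf : AEStronglyMeasurable f μ) (hg : AEStronglyMeasurable g μ)
    (hk : AEStronglyMeasurable k μ) {T : G → G} (hT : Measurable T) :
    ∫⁻ b, ∫⁻ x, ‖f x‖ₑ * ‖g (T x - b) - k b‖ₑ ∂μ ∂μ =
      ∫⁻ x, ‖f x‖ₑ * ∫⁻ b, ‖g (T x - b) - k b‖ₑ ∂μ ∂μ := by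
  have hgT : AEStronglyMeasurable (fun p : G × G => g (T p.2 - p.1)) (μ.prod μ) :=
    hg.comp_quasiMeasurePreserving <|
      QuasiMeasurePreserving.prod_of_left ((hT.comp measurable_snd).sub measurable_fst)
        (.of_forall fun x => quasiMeasurePreserving_sub_left_of_right_invariant μ (T x))
  have hmeas : AEMeasurable (Function.uncurry fun b x => ‖f x‖ₑ * ‖g (T x - b) - k b‖ₑ)
      (μ.prod μ) := hf.comp_snd.enorm.mul (hgT.sub hk.comp_fst).enorm
  rw [lintegral_lintegral_swap hmeas]
  exact lintegral_congr fun x => lintegral_const_mul' _ _ enorm_ne_top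

variable [μ.IsNegInvariant]

lemma lintegral_enorm_integral_mul_conj_comp_sub_le {f g : G → ℂ}
    (hf : AEStronglyMeasurable f μ) (hg : AEStronglyMeasurable g μ) {T : G → G}
    (hT : Measurable T) :
    ∫⁻ b, ‖∫ x, f x * conj (g (T x - b)) ∂μ‖ₑ ∂μ ≤ (∫⁻ x, ‖f x‖ₑ ∂μ) * ∫⁻ y, ‖g y‖ₑ ∂μ :=
  calc ∫⁻ b, ‖∫ x, f x * conj (g (T x - b)) ∂μ‖ₑ ∂μ
      ≤ ∫⁻ b, ∫⁻ x, ‖f x‖ₑ * ‖g (T x - b) - 0‖ₑ ∂μ ∂μ := by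
        refine lintegral_mono fun b => (enorm_integral_le_lintegral_enorm _).trans_eq ?_
        simp only [enorm_mul, RCLike.enorm_conj, sub_zero]
    _ = ∫⁻ x, ‖f x‖ₑ * ∫⁻ b, ‖g (T x - b)‖ₑ ∂μ ∂μ := by
        simpa only [sub_zero] using
          lintegral_lintegral_enorm_mul_comp_sub_sub_swap (k := fun _ => 0) hf hg
            aestronglyMeasurable_const hT
    _ = (∫⁻ x, ‖f x‖ₑ ∂μ) * ∫⁻ y, ‖g y‖ₑ ∂μ := by
        simp only [lintegral_sub_left_eq_self (fun y => ‖g y‖ₑ)]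
        exact lintegral_mul_const'' _ hf.enorm

lemma lintegral_enorm_integral_mul_conj_comp_sub_le_of_integral_eq_zero {f g : G → ℂ}
    (hf : Integrable f μ) (hf0 : ∫ x, f x ∂μ = 0) (hg : AEStronglyMeasurable g μ)
    {T : G → G} (hT : Measurable T) :
    ∫⁻ b, ‖∫ x, f x * conj (g (T x - b)) ∂μ‖ₑ ∂μ ≤
      ∫⁻ x, ‖f x‖ₑ * ∫⁻ u, ‖g (u + T x) - g u‖ₑ ∂μ ∂μ :=
  calc ∫⁻ b, ‖∫ x, f x * conj (g (T x - b)) ∂μ‖ₑ ∂μ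
      ≤ ∫⁻ b, ∫⁻ x, ‖f x‖ₑ * ‖g (T x - b) - g (-b)‖ₑ ∂μ ∂μ :=
        lintegral_mono fun b => enorm_integral_mul_conj_le_of_integral_eq_zero hf hf0 _ _
    _ = ∫⁻ x, ‖f x‖ₑ * ∫⁻ u, ‖g (u + T x) - g u‖ₑ ∂μ ∂μ := by
        simp only [lintegral_lintegral_enorm_mul_comp_sub_sub_swap (k := fun b => g (-b)) hf.1 hg
          (hg.comp_quasiMeasurePreserving (quasiMeasurePreserving_neg μ)) hT,
          lintegral_enorm_comp_sub_sub_comp_neg]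

end Correlation

lemma lintegral_enorm_integral_mul_conj_comp_smul_sub_le_of_holder {E : Type*}
    [NormedAddCommGroup E] [NormedSpace ℝ E] [MeasurableSpace E] [BorelSpace E]
    [SecondCountableTopology E] {μ : Measure E} [SFinite μ] [μ.IsAddLeftInvariant]
    [μ.IsNegInvariant] {f g : E → ℂ} (hf : Integrable f μ) (hf0 : ∫ x, f x ∂μ = 0)
    (hg : Integrable g μ) {C α : ℝ} (hholder : ∀ h, ∫ x, ‖g (x + h) - g x‖ ∂μ ≤ C * ‖h‖ ^ α)
    {s : ℝ} (hs : 0 ≤ s) :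
    ∫⁻ b, ‖∫ x, f x * conj (g (s • x - b)) ∂μ‖ₑ ∂μ ≤
      ENNReal.ofReal (s ^ α) * ENNReal.ofReal C * ∫⁻ x, ‖f x‖ₑ * ENNReal.ofReal (‖x‖ ^ α) ∂μ :=
  calc ∫⁻ b, ‖∫ x, f x * conj (g (s • x - b)) ∂μ‖ₑ ∂μ
      ≤ ∫⁻ x, ‖f x‖ₑ * ∫⁻ u, ‖g (u + s • x) - g u‖ₑ ∂μ ∂μ :=
        lintegral_enorm_integral_mul_conj_comp_sub_le_of_integral_eq_zero hf hf0 hg.1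
          (measurable_const_smul s)
    _ ≤ ∫⁻ x, ‖f x‖ₑ * ENNReal.ofReal (C * ‖s • x‖ ^ α) ∂μ := by
        gcongr with x
        have hdiff : Integrable (fun u => g (u + s • x) - g u) μ := (hg.comp_add_right _).sub hg
        rw [← ofReal_integral_norm_eq_lintegral_enorm hdiff]
        exact ENNReal.ofReal_le_ofReal (hholder _)
    _ = ENNReal.ofReal (s ^ α) * ENNReal.ofReal C *
          ∫⁻ x, ‖f x‖ₑ * ENNReal.ofReal (‖x‖ ^ α) ∂μ := by
        rw [← lintegral_const_mul' _ _ (by finiteness)]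
        refine lintegral_congr fun x => ?_
        rw [norm_smul, Real.norm_of_nonneg hs, mul_rpow hs (norm_nonneg x), ← mul_assoc,
          ENNReal.ofReal_mul' (by positivity), mul_comm C, ENNReal.ofReal_mul (by positivity)]
        ring

lemma setLIntegral_Ioi_zero_lt_top_of_le_rpow {F : ℝ → ℝ≥0∞} {A B : ℝ≥0∞} {p q : ℝ}
    (hA : A ≠ ⊤) (hB : B ≠ ⊤) (hp : -1 < p) (hq : q < -1)
    (h_small : ∀ a ∈ Set.Ioc (0 : ℝ) 1, F a ≤ A * ENNReal.ofReal (a ^ p))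
    (h_large : ∀ a ∈ Set.Ioi (1 : ℝ), F a ≤ B * ENNReal.ofReal (a ^ q)) :
    ∫⁻ a in Set.Ioi 0, F a < ⊤ := by
  rw [← Set.Ioc_union_Ioi_eq_Ioi zero_le_one,
    lintegral_union measurableSet_Ioi (Set.Ioc_disjoint_Ioi le_rfl)]
  refine ENNReal.add_lt_top.2 ⟨?_, ?_⟩
  · calc ∫⁻ a in Set.Ioc 0 1, F a
        ≤ ∫⁻ a in Set.Ioc 0 1, A * ENNReal.ofReal (a ^ p) :=
          setLIntegral_mono' measurableSet_Ioc h_small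
      _ < ⊤ := by
        rw [lintegral_const_mul' _ _ hA]
        exact ENNReal.mul_lt_top hA.lt_top
          (intervalIntegral.intervalIntegrable_rpow' hp).1.setLIntegral_lt_top
  · calc ∫⁻ a in Set.Ioi 1, F a
        ≤ ∫⁻ a in Set.Ioi 1, B * ENNReal.ofReal (a ^ q) :=
          setLIntegral_mono' measurableSet_Ioi h_large
      _ < ⊤ := by
        rw [lintegral_const_mul' _ _ hB]
        exact ENNReal.mul_lt_top hB.lt_top
          ((integrableOn_Ioi_rpow_iff zero_lt_one).2 hq).setLIntegral_lt_top

theorem wavelet_kernel_weighted_integrable_general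
    {d : ℕ} (ε α : ℝ) (hε : 0 < ε) (hεα : ε < α)
    (φ : EuclideanSpace ℝ (Fin d) → ℂ)
    (hφ1 : Integrable φ (volume))
    (hmean : ∫ x, φ x = 0)
    (hmoment : Integrable (fun x : EuclideanSpace ℝ (Fin d) => ‖φ x‖ * ‖x‖ ^ α) volume)
    (C : ℝ)
    (hholder : ∀ h : EuclideanSpace ℝ (Fin d),
      ∫ x, ‖φ (x + h) - φ x‖ ≤ C * ‖h‖ ^ α) :
    ∫⁻ a in Set.Ioi (0 : ℝ),
        (∫⁻ b : EuclideanSpace ℝ (Fin d),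
          ENNReal.ofReal
            ‖∫ x : EuclideanSpace ℝ (Fin d),
                φ x * conj (((a ^ (-(d : ℝ) / 2) : ℝ) : ℂ) * φ (a⁻¹ • x - b))‖)
        * ENNReal.ofReal (a ^ ((d : ℝ) / 2 + ε - 1))
      < ⊤ := by
  have hweight : ∀ a : ℝ, 0 < a →
      (∫⁻ b, ENNReal.ofReal ‖∫ x, φ x * conj (((a ^ (-(d : ℝ) / 2) : ℝ) : ℂ) * φ (a⁻¹ • x - b))‖)
        * ENNReal.ofReal (a ^ ((d : ℝ) / 2 + ε - 1)) =
      ENNReal.ofReal (a ^ (ε - 1)) * ∫⁻ b, ‖∫ x, φ x * conj (φ (a⁻¹ • x - b))‖ₑ := by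
    intro a ha
    simp only [ofReal_norm_integral_mul_conj_ofReal_mul _ _ (rpow_nonneg ha.le _)]
    rw [lintegral_const_mul' _ _ ENNReal.ofReal_ne_top, mul_right_comm,
      ← ENNReal.ofReal_mul (rpow_nonneg ha.le _), ← rpow_add ha]
    ring_nf
  have hmoment' : ∫⁻ x, ‖φ x‖ₑ * ENNReal.ofReal (‖x‖ ^ α) ≠ ⊤ := by
    refine ne_of_lt (lt_of_eq_of_lt (lintegral_congr fun x => ?_) hmoment.2)
    rw [enorm_mul, enorm_norm, Real.enorm_of_nonneg (by positivity)]
  refine setLIntegral_Ioi_zero_lt_top_of_le_rpow (p := ε - 1) (q := ε - α - 1)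
    (A := (∫⁻ x, ‖φ x‖ₑ) * ∫⁻ x, ‖φ x‖ₑ)
    (B := ENNReal.ofReal C * ∫⁻ x, ‖φ x‖ₑ * ENNReal.ofReal (‖x‖ ^ α))
    (ENNReal.mul_ne_top hφ1.2.ne hφ1.2.ne)
    (ENNReal.mul_ne_top ENNReal.ofReal_ne_top hmoment') (by linarith) (by linarith) ?_ ?_
  · intro a ha
    rw [hweight a ha.1, mul_comm]
    gcongr
    simpa only [RCLike.enorm_conj] using lintegral_enorm_integral_mul_conj_comp_sub_le hφ1.1 hφ1.1
      (measurable_const_smul a⁻¹)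
  · intro a ha
    have ha0 : 0 < a := zero_lt_one.trans ha
    rw [hweight a ha0]
    calc ENNReal.ofReal (a ^ (ε - 1)) * ∫⁻ b, ‖∫ x, φ x * conj (φ (a⁻¹ • x - b))‖ₑ
        ≤ ENNReal.ofReal (a ^ (ε - 1)) * (ENNReal.ofReal (a⁻¹ ^ α) * ENNReal.ofReal C *
            ∫⁻ x, ‖φ x‖ₑ * ENNReal.ofReal (‖x‖ ^ α)) := by
          gcongr
          exact lintegral_enorm_integral_mul_conj_comp_smul_sub_le_of_holder hφ1 hmean hφ1
            hholder (inv_nonneg.2 ha0.le)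
      _ = _ := by
          rw [inv_rpow ha0.le, ← rpow_neg ha0.le, mul_assoc (ENNReal.ofReal _), ← mul_assoc,
            ← ENNReal.ofReal_mul (rpow_nonneg ha0.le _), ← rpow_add ha0, mul_comm]
          ring_nf

/-- if `0 < ε < α ≤ 1` and `φ ∈ L¹ ∩ L²(ℝ^d)` has mean zero, finite
`α`-moment, and L¹-Hölder modulus of continuity of order `α`, then the wavelet
self-reproducing kernel `W_φφ(a,b) = ⟨φ, φ_{a,b}⟩` is integrable against the
weight `a^{d/2+ε}` with respect to `db da/a`. -/
theorem wavelet_kernel_weighted_integrable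
    {d : ℕ} (ε α : ℝ) (hε : 0 < ε) (hεα : ε < α) (hα : α ≤ 1)
    (φ : EuclideanSpace ℝ (Fin d) → ℂ)
    (hφ1 : Integrable φ (volume)) (hφ2 : MemLp φ 2 (volume))
    (hmean : ∫ x, φ x = 0)
    (hmoment : Integrable (fun x : EuclideanSpace ℝ (Fin d) => ‖φ x‖ * ‖x‖ ^ α) volume)
    (C : ℝ)
    (hholder : ∀ h : EuclideanSpace ℝ (Fin d),
      ∫ x, ‖φ (x + h) - φ x‖ ≤ C * ‖h‖ ^ α) :
    ∫⁻ a in Set.Ioi (0 : ℝ),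
        (∫⁻ b : EuclideanSpace ℝ (Fin d),
          ENNReal.ofReal
            ‖∫ x : EuclideanSpace ℝ (Fin d),
                φ x * conj (((a ^ (-(d : ℝ) / 2) : ℝ) : ℂ) * φ (a⁻¹ • x - b))‖)
        * ENNReal.ofReal (a ^ ((d : ℝ) / 2 + ε - 1))
      < ⊤ :=
  wavelet_kernel_weighted_integrable_general ε α hε hεα φ hφ1 hmean hmoment C hholder
end

section
/- Let T be a compact positive self-adjoint operator on a Hilbert space H with ‖T‖ ≤ 1, and suppose {S_h}_{h∈Γ} is a group of unitaries on H indexed by a group Γ such that for every h ∈ Γ there is a compact positive operator T_h with T_h ≥ S_h T S_h^* and a compact positive operator T' ≥ T_h for all h in a fixed infinite sequence. If f ≠ 0 satisfies Tf = f and the vectors f_k = S_{h_k}⋯S_{h_1} f are linearly independent, and T' ≥ S_{h_k}⋯S_{h_1} T (S_{h_k}⋯S_{h_1})^* for all k with ‖T'‖ ≤ 1 and T' compact, then a contradiction arises: each f_k is an eigenvector of T' with eigenvalue 1, giving an infinite-dimensional eigenspace for a compact operator. Conclude: no such nonzero fixed vector f exists, i.e., ‖T‖ attained at 1 is impossible and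 hence ⟨(I − T)f, f⟩ ≥ c‖f‖² for some c > 0 and all f. -/
/-!
If `T f = f` with `f ≠ 0`, then `‖f‖² = ⟨T f, f⟩ ≤ ⟨T' U f, U f⟩ ≤ ‖U f‖² = ‖f‖²` for every
isometry `U = U n`, so `⟨(1 - T') U f, U f⟩ = 0`, and positivity of `1 - T'` forces `T' U f = U f`.
The linearly independent vectors `U n f` would then span an infinite-dimensional eigenspace of the
compact operator `T'` for the eigenvalue `1`. Hence `1` is not an eigenvalue of `T`, so by the
Fredholm alternative `1 - T` is bounded below, and for the positive operator `A = 1 - T` the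
inequality `‖A f‖² ≤ ‖A‖ ⟨A f, f⟩` turns this into the lower bound on `⟨(1 - T) f, f⟩`.
-/

open MeasureTheory ContinuousLinearMap

local notation "⟪" x ", " y "⟫" => @inner ℂ _ _ x y

namespace IsCompactOperator

section Normed

variable {𝕜 E : Type*} [NontriviallyNormedField 𝕜] [NormedAddCommGroup E] [NormedSpace 𝕜 E]
  {T : E →L[𝕜] E}

theorem exists_antilipschitzWith_one_sub (hT : IsCompactOperator T)
    (h : ∀ x, T x = x → x = 0) : ∃ K, AntilipschitzWith K (1 - T : E →L[𝕜] E) := by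
  have hno : ¬ Module.End.HasEigenvalue (T : E →ₗ[𝕜] E) 1 := fun hev => by
    obtain ⟨v, hv, hv0⟩ := hev.exists_hasEigenvector
    exact hv0 (h v (by simpa using Module.End.mem_eigenspace_iff.mp hv))
  obtain ⟨K, hK⟩ := hT.antilipschitz_of_not_hasEigenvalue one_ne_zero hno
  refine ⟨K, fun x y => ?_⟩
  simpa [← edist_neg_neg (T x - x)] using hK x y

end Normed

section InnerProduct

variable {𝕜 E : Type*} [RCLike 𝕜] [NormedAddCommGroup E] [InnerProductSpace 𝕜 E] [CompleteSpace E]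
  {T : E →L[𝕜] E}

theorem not_linearIndependent_of_forall_apply_eq_self (hT : IsCompactOperator T) {ι : Type*}
    [Infinite ι] {v : ι → E} (hv : ∀ i, T (v i) = v i) : ¬ LinearIndependent 𝕜 v := by
  have := ContinuousLinearMap.finite_dimensional_eigenspace hT 1 one_ne_zero
  have hmem (i : ι) : v i ∈ Module.End.eigenspace (T : E →ₗ[𝕜] E) 1 := by simp [hv i]
  exact fun hli => Module.Finite.not_linearIndependent_of_infinite _
    (LinearIndependent.of_comp (Submodule.subtype _) (v := fun i => ⟨v i, hmem i⟩) hli)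

end InnerProduct

end IsCompactOperator

namespace ContinuousLinearMap

variable {H : Type*} [NormedAddCommGroup H] [InnerProductSpace ℂ H] [CompleteSpace H]

theorem isPositive_one_sub {T : H →L[ℂ] H} (hT : IsSelfAdjoint T)
    (hT1 : ∀ f : H, (⟪T f, f⟫).re ≤ ‖f‖ ^ 2) : (1 - T).IsPositive := by
  refine isPositive_def'.mpr ⟨(IsSelfAdjoint.one _).sub hT, fun f => ?_⟩
  simp only [reApplyInnerSelf_apply, sub_apply, inner_sub_left, map_sub]
  have := hT1 f
  rw [← inner_self_eq_norm_sq (𝕜 := ℂ)] at this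
  simpa using this

theorem IsPositive.sq_norm_apply_le {A : H →L[ℂ] H} (hA : A.IsPositive) (x : H) :
    ‖A x‖ ^ 2 ≤ ‖A‖ * (⟪A x, x⟫).re := by
  obtain ⟨S, rfl⟩ :=
    CStarAlgebra.nonneg_iff_eq_star_mul_self.mp ((nonneg_iff_isPositive A).mpr hA)
  have hinner : (⟪(star S * S) x, x⟫).re = ‖S x‖ ^ 2 := by
    rw [star_eq_adjoint, mul_def, comp_apply, adjoint_inner_left, inner_self_eq_norm_sq_to_K]
    norm_cast
  calc ‖(star S * S) x‖ ^ 2 ≤ (‖star S‖ * ‖S x‖) ^ 2 := by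
        gcongr; exact (star S).le_opNorm (S x)
    _ = ‖star S * S‖ * (⟪(star S * S) x, x⟫).re := by
        rw [hinner, CStarRing.norm_star_mul_self, norm_star]; ring

theorem IsPositive.apply_eq_zero_of_re_inner_eq_zero {A : H →L[ℂ] H} (hA : A.IsPositive) {x : H}
    (hx : (⟪A x, x⟫).re = 0) : A x = 0 := by
  have := hA.sq_norm_apply_le x
  rw [hx, mul_zero] at this
  exact norm_eq_zero.mp (pow_eq_zero_iff two_ne_zero |>.mp (le_antisymm this (sq_nonneg _)))

theorem IsPositive.exists_pos_mul_sq_norm_le_of_antilipschitz {A : H →L[ℂ] H}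
    (hA : A.IsPositive) {K : NNReal} (hK : AntilipschitzWith K A) :
    ∃ c > (0 : ℝ), ∀ x, c * ‖x‖ ^ 2 ≤ (⟪A x, x⟫).re := by
  refine ⟨((K : ℝ) ^ 2 * ‖A‖ + 1)⁻¹, by positivity, fun x => ?_⟩
  rw [inv_mul_le_iff₀ (by positivity)]
  have hre := hA.re_inner_nonneg_left x
  calc ‖x‖ ^ 2 ≤ (K * ‖A x‖) ^ 2 := by gcongr; exact hK.le_mul_norm (map_zero A) x
    _ = K ^ 2 * ‖A x‖ ^ 2 := by ring
    _ ≤ K ^ 2 * (‖A‖ * (⟪A x, x⟫).re) := by gcongr; exact hA.sq_norm_apply_le x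
    _ ≤ (K ^ 2 * ‖A‖ + 1) * (⟪A x, x⟫).re := by linear_combination hre

theorem apply_eq_self_of_conj_le {T T' V : H →L[ℂ] H} (hV : ∀ x, ‖V x‖ = ‖x‖)
    (hT' : (1 - T').IsPositive)
    (hdom : ∀ y, (⟪T (adjoint V y), adjoint V y⟫).re ≤ (⟪T' y, y⟫).re)
    {f : H} (hf : T f = f) : T' (V f) = V f := by
  have hVV : adjoint V (V f) = f := by
    rw [← comp_apply, (norm_map_iff_adjoint_comp_self V).mp hV]
    rfl
  have hinner : ⟪V f, V f⟫ = ⟪f, f⟫ := by rw [← adjoint_inner_right, hVV]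
  have hle := hdom (V f)
  rw [hVV, hf, ← hinner] at hle
  have hzero : (⟪(1 - T') (V f), V f⟫).re = 0 := by
    refine le_antisymm ?_ (hT'.re_inner_nonneg_left _)
    simpa [inner_sub_left] using hle
  have h0 : V f - T' (V f) = 0 := hT'.apply_eq_zero_of_re_inner_eq_zero hzero
  exact (sub_eq_zero.mp h0).symm

end ContinuousLinearMap

theorem no_fixed_vector_and_gap_general
    {H : Type*} [NormedAddCommGroup H] [InnerProductSpace ℂ H] [CompleteSpace H]
    (T : H →L[ℂ] H) (hTc : IsCompactOperator T) (hTsa : IsSelfAdjoint T)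
    (hT1 : ∀ f : H, (⟪T f, f⟫).re ≤ ‖f‖ ^ 2)
    (U : ℕ → (H →L[ℂ] H))
    (hUiso : ∀ n (f : H), ‖U n f‖ = ‖f‖)
    (T' : H →L[ℂ] H) (hT'c : IsCompactOperator T') (hT'sa : IsSelfAdjoint T')
    (hT'1 : ∀ f : H, (⟪T' f, f⟫).re ≤ ‖f‖ ^ 2)
    (hdom : ∀ n (f : H),
      (⟪T (ContinuousLinearMap.adjoint (U n) f), ContinuousLinearMap.adjoint (U n) f⟫).re
        ≤ (⟪T' f, f⟫).re)
    (hindep : ∀ f : H, f ≠ 0 → T f = f → LinearIndependent ℂ fun n : ℕ => U n f) :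
    (∀ f : H, T f = f → f = 0) ∧
    ∃ c > (0 : ℝ), ∀ f : H, c * ‖f‖ ^ 2 ≤ (⟪f, f⟫ - ⟪T f, f⟫).re := by
  have hnofix : ∀ f : H, T f = f → f = 0 := fun f hf => by
    by_contra hf0
    exact hT'c.not_linearIndependent_of_forall_apply_eq_self
      (fun n => apply_eq_self_of_conj_le (hUiso n) (isPositive_one_sub hT'sa hT'1) (hdom n) hf)
      (hindep f hf0 hf)
  refine ⟨hnofix, ?_⟩
  obtain ⟨K, hK⟩ := hTc.exists_antilipschitzWith_one_sub hnofix
  obtain ⟨c, hc, hcA⟩ :=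
    (isPositive_one_sub hTsa hT1).exists_pos_mul_sq_norm_le_of_antilipschitz hK
  exact ⟨c, hc, fun f => by simpa [inner_sub_left] using hcA f⟩

/-- let `T` be a compact positive self-adjoint operator with `0 ≤ T ≤ I`,
`U n` a sequence of unitaries (the iterated shifts `S_{h_n}⋯S_{h_1}`), and `T'` a
compact operator with `0 ≤ T' ≤ I` dominating all conjugates `U_n T U_n^*`.  If for
every nonzero fixed vector `f` of `T` the orbit `(U n f)` is linearly independent,
then `T` has no nonzero fixed vector, and consequently `I − T` is bounded below:
`⟨(I − T)f, f⟩ ≥ c‖f‖²` for some `c > 0` and all `f`. -/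
theorem no_fixed_vector_and_gap
    {H : Type*} [NormedAddCommGroup H] [InnerProductSpace ℂ H] [CompleteSpace H]
    (T : H →L[ℂ] H) (hTc : IsCompactOperator T) (hTsa : IsSelfAdjoint T)
    (hT0 : ∀ f : H, 0 ≤ (⟪T f, f⟫).re) (hT1 : ∀ f : H, (⟪T f, f⟫).re ≤ ‖f‖ ^ 2)
    (U : ℕ → (H →L[ℂ] H))
    (hUiso : ∀ n (f : H), ‖U n f‖ = ‖f‖)
    (hUsurj : ∀ n, Function.Surjective (U n))
    (T' : H →L[ℂ] H) (hT'c : IsCompactOperator T') (hT'sa : IsSelfAdjoint T')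
    (hT'0 : ∀ f : H, 0 ≤ (⟪T' f, f⟫).re) (hT'1 : ∀ f : H, (⟪T' f, f⟫).re ≤ ‖f‖ ^ 2)
    (hdom : ∀ n (f : H),
      (⟪T (ContinuousLinearMap.adjoint (U n) f), ContinuousLinearMap.adjoint (U n) f⟫).re
        ≤ (⟪T' f, f⟫).re)
    (hindep : ∀ f : H, f ≠ 0 → T f = f → LinearIndependent ℂ fun n : ℕ => U n f) :
    (∀ f : H, T f = f → f = 0) ∧
    ∃ c > (0 : ℝ), ∀ f : H, c * ‖f‖ ^ 2 ≤ (⟪f, f⟫ - ⟪T f, f⟫).re :=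
  no_fixed_vector_and_gap_general T hTc hTsa hT1 U hUiso T' hT'c hT'sa hT'1 hdom hindep
end
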